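/- Let (R_n)_{n≥0} be a cyclic urn process with m types started with one ball of type 0. Then for every k ∈ {0,…,m−1}, the complex-valued process (M_{k,n})_{n≥0} is a centered martingale with respect to the filtration (𝓕_n)_{n≥0}; that is, E[M_{k,n}] = 0 for all n and E[M_{k,n+1} ∣ 𝓕_n] = M_{k,n} almost surely for all n ≥ 0. -/

import Mathlib

open MeasureTheory ProbabilityTheory Filter Complex Finset Topology

noncomputable section

/-- `ω = exp(2πi/m)`, the `m`-th elementary root of unity. -/
def cw (m : ℕ) : ℂ := Complex.exp (2 * Real.pi * Complex.I / m)

/-- `λ_k = cos(2πk/m)`. -/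
def lam (m k : ℕ) : ℝ := Real.cos (2 * Real.pi * k / m)

/-- `μ_k = sin(2πk/m)`. -/
def muim (m k : ℕ) : ℝ := Real.sin (2 * Real.pi * k / m)

/-- the eigenvector `v_k = (1/m)(1, ω^{-k}, …, ω^{-(m-1)k})`. -/
def vvec (m k : ℕ) : Fin m → ℂ :=
  fun t => (m : ℂ)⁻¹ * cw m ^ (-((k * (t : ℕ) : ℕ) : ℤ))

/-- the dual coefficient `u_k(w) = ∑_t ω^{kt} w_t`. -/
def ucoef (m k : ℕ) (w : Fin m → ℝ) : ℂ :=
  ∑ t : Fin m, cw m ^ (k * (t : ℕ)) * (w t : ℂ)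

/-- the replacement matrix `A` of the cyclic urn. -/
def repA (m : ℕ) : Matrix (Fin m) (Fin m) ℝ :=
  Matrix.of fun i j => if (j : ℕ) = ((i : ℕ) + 1) % m then 1 else 0

/-- the filtration `𝓕_n = σ(R_0, …, R_n)`. -/
def urnFilt {Ω : Type*} [MeasurableSpace Ω] (m : ℕ) (R : ℕ → Ω → Fin m → ℝ) (n : ℕ) :
    MeasurableSpace Ω :=
  ⨆ i ∈ Finset.range (n + 1), MeasurableSpace.comap (R i) inferInstance

/-- A cyclic urn process with `m` types started with one ball of type `j0`. -/
structure IsCyclicUrn {Ω : Type*} [MeasurableSpace Ω] (μ : Measure Ω) (m : ℕ) (j0 : Fin m)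
    (R : ℕ → Ω → Fin m → ℝ) : Prop where
  isProb : IsProbabilityMeasure μ
  meas : ∀ n, Measurable (R n)
  natVal : ∀ n ω i, ∃ z : ℕ, R n ω i = z
  init : ∀ ω, R 0 ω = fun i => if i = j0 then 1 else 0
  step : ∀ n, ∀ j : Fin m,
    μ[Set.indicator {ω | R (n + 1) ω =
        fun i => R n ω i + if (i : ℕ) = ((j : ℕ) + 1) % m then 1 else 0}
      (fun _ => (1 : ℝ)) | urnFilt m R n]
      =ᵐ[μ] fun ω => R n ω j / (n + 1)

/-- componentwise expectation `E[X]` of a random vector. -/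
def expVec {Ω : Type*} [MeasurableSpace Ω] (μ : Measure Ω) {m : ℕ}
    (X : Ω → Fin m → ℝ) : Fin m → ℝ := fun i => ∫ ω, X ω i ∂μ

/-- the martingale `M_{k,n} = (Γ(n+1)/Γ(n+1+ω^k)) u_k(R_n - E[R_n])`, with `M_{k,0} = 0`. -/
def Mart {Ω : Type*} [MeasurableSpace Ω] (μ : Measure Ω) (m k : ℕ)
    (R : ℕ → Ω → Fin m → ℝ) (n : ℕ) (ω : Ω) : ℂ :=
  if n = 0 then 0
  else (Complex.Gamma ((n : ℂ) + 1) / Complex.Gamma ((n : ℂ) + 1 + cw m ^ k)) *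
    ucoef m k (fun t => R n ω t - expVec μ (R n) t)

/-- `ν` is the centered Gaussian distribution `𝒩(0, S)` on `ℝ^d` (Cramér–Wold
characterization: every linear functional is one-dimensional centered Gaussian). -/
def IsCenteredGaussian {d : ℕ} (ν : Measure (Fin d → ℝ)) (S : Matrix (Fin d) (Fin d) ℝ) : Prop :=
  IsProbabilityMeasure ν ∧
  ∀ l : Fin d → ℝ,
    ν.map (fun x => ∑ i, l i * x i) =
      gaussianReal 0 (Real.toNNReal (∑ i, ∑ j, l i * S i j * l j))

/-- convergence in distribution of the random vectors `X_n` to the law `ν`. -/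
def TendstoInDist {Ω : Type*} [MeasurableSpace Ω] (μ : Measure Ω) {d : ℕ}
    (X : ℕ → Ω → Fin d → ℝ) (ν : Measure (Fin d → ℝ)) : Prop :=
  ∀ f : BoundedContinuousFunction (Fin d → ℝ) ℝ,
    Tendsto (fun n => ∫ ω, f (X n ω) ∂μ) atTop (𝓝 (∫ x, f x ∂ν))


/-!
Write `X_n = u_k(R_n - E[R_n])`. Given `𝓕_n`, the next draw adds a ball of type `t` with
probability `R_{n,t-1}/(n+1)`, so `E[R_{n+1} | 𝓕_n] = R_n + (n+1)⁻¹ R_n ∘ σ⁻¹` for the cyclic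
rotation `σ`. Since `u_k(v ∘ σ⁻¹) = ω^k u_k(v)`, this gives
`E[X_{n+1} | 𝓕_n] = (1 + ω^k/(n+1)) X_n`, and the normalisation `Γ(n+1)/Γ(n+1+ω^k)` absorbs
exactly this factor by `Γ(s+1) = s Γ(s)`. Centredness then follows from `M_0 = 0` and the tower
property.

The definition of the urn only prescribes the conditional probability of each possible draw; that
some draw happens almost surely holds because these probabilities sum to `(total mass)/(n+1) = 1`,
and the total mass `n+1` is itself obtained by induction along the way.
-/

open Function

open ContinuousLinearMap in
theorem ae_condExp_apply_eq {ι Ω : Type*} [Fintype ι] {m m₀ : MeasurableSpace Ω} {μ : Measure Ω}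
    {f : Ω → ι → ℝ} (hf : Integrable f μ) :
    ∀ᵐ ω ∂μ, ∀ i, μ[f | m] ω i = μ[fun ω => f ω i | m] ω :=
  ae_all_iff.2 fun i => (proj (R := ℝ) (φ := fun _ : ι => ℝ) i).comp_condExp_comm hf

theorem ae_exists_mem_of_sum_measureReal_eq_one {ι Ω : Type*} [Fintype ι] [MeasurableSpace Ω]
    {μ : Measure Ω} [IsProbabilityMeasure μ] {A : ι → Set Ω}
    (hA : ∀ i, MeasurableSet (A i)) (hdisj : Pairwise (Disjoint on A))
    (hsum : ∑ i, μ.real (A i) = 1) : ∀ᵐ ω ∂μ, ∃ i, ω ∈ A i := by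
  have hU : MeasurableSet (⋃ i ∈ (univ : Finset ι), A i) :=
    Finset.measurableSet_biUnion _ fun i _ => hA i
  have hμU : μ.real (⋃ i ∈ (univ : Finset ι), A i) = 1 := by
    rw [measureReal_biUnion_finset (fun i _ j _ hij => hdisj hij) fun i _ => hA i, hsum]
  rw [measureReal_def, ENNReal.toReal_eq_one_iff] at hμU
  filter_upwards [(mem_ae_iff_prob_eq_one hU).2 hμU] with ω hω
  simpa using hω

theorem Complex.Gamma_add_one_div_Gamma_add_one_add_mul {s w : ℂ} (hs : s ≠ 0)
    (hsw : s + w ≠ 0) :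
    Gamma (s + 1) / Gamma (s + 1 + w) * (1 + w / s) = Gamma s / Gamma (s + w) := by
  rw [add_right_comm, Gamma_add_one s hs, Gamma_add_one _ hsw]
  field_simp

theorem Fin.val_finRotate {m : ℕ} (j : Fin m) : (finRotate m j : ℕ) = ((j : ℕ) + 1) % m := by
  have := j.neZero
  rw [finRotate_apply, Fin.val_add, Fin.val_one', Nat.add_mod_mod]

theorem norm_cw (m : ℕ) : ‖cw m‖ = 1 := by
  rw [cw, Complex.norm_exp]
  simp

theorem cw_pow_self {m : ℕ} (hm : m ≠ 0) : cw m ^ m = 1 :=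
  (Complex.isPrimitiveRoot_exp m hm).pow_eq_one

def ucoefCLM (m k : ℕ) : (Fin m → ℝ) →L[ℝ] ℂ :=
  ∑ t : Fin m, cw m ^ (k * (t : ℕ)) • (Complex.ofRealCLM.comp (ContinuousLinearMap.proj t))

@[simp]
theorem ucoefCLM_apply (m k : ℕ) (w : Fin m → ℝ) : ucoefCLM m k w = ucoef m k w := by
  simp [ucoefCLM, ucoef]

theorem ucoef_comp_finRotate_symm (m k : ℕ) (v : Fin m → ℝ) :
    ucoef m k (v ∘ (finRotate m).symm) = cw m ^ k * ucoef m k v := by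
  rcases Nat.eq_zero_or_pos m with rfl | hm
  · simp [ucoef]
  have hcw : (cw m ^ k) ^ m = 1 := by
    rw [← pow_mul, mul_comm, pow_mul, cw_pow_self hm.ne', one_pow]
  simp only [ucoef, Finset.mul_sum]
  rw [← Equiv.sum_comp (finRotate m)]
  refine Finset.sum_congr rfl fun s _ => ?_
  rw [Function.comp_apply, Equiv.symm_apply_apply, Fin.val_finRotate, pow_mul,
    ← pow_eq_pow_mod _ hcw]
  ring

theorem natCast_add_one_add_cw_pow_ne_zero (m k : ℕ) {n : ℕ} (hn : n ≠ 0) :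
    (n : ℂ) + 1 + cw m ^ k ≠ 0 := by
  have h_re : -1 ≤ (cw m ^ k).re := by
    have := (abs_le.1 ((cw m ^ k).abs_re_le_norm)).1
    rwa [norm_pow, norm_cw, one_pow] at this
  have hn : (1 : ℝ) ≤ n := Nat.one_le_cast.2 (Nat.one_le_iff_ne_zero.2 hn)
  intro h
  have := congrArg Complex.re h
  simp only [Complex.add_re, Complex.natCast_re, Complex.one_re, Complex.zero_re] at this
  linarith

section Urn

variable {Ω : Type*} {m : ℕ} {R : ℕ → Ω → Fin m → ℝ}

def urnStepEvent (R : ℕ → Ω → Fin m → ℝ) (n : ℕ) (j : Fin m) : Set Ω :=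
  {ω | R (n + 1) ω = fun i => R n ω i + if (i : ℕ) = ((j : ℕ) + 1) % m then 1 else 0}

theorem mem_urnStepEvent_iff {n : ℕ} {j : Fin m} {ω : Ω} :
    ω ∈ urnStepEvent R n j ↔ R (n + 1) ω = R n ω + Pi.single (finRotate m j) 1 := by
  simp only [urnStepEvent, Set.mem_ofPred_eq, funext_iff, Pi.add_apply, Pi.single_apply,
    Fin.ext_iff, Fin.val_finRotate]

theorem pairwise_disjoint_urnStepEvent (R : ℕ → Ω → Fin m → ℝ) (n : ℕ) :
    Pairwise (Disjoint on urnStepEvent R n) := by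
  refine fun j j' hjj' => Set.disjoint_left.2 fun ω hj hj' => hjj' ?_
  rw [mem_urnStepEvent_iff] at hj hj'
  have h := congrFun (hj.symm.trans hj') (finRotate m j)
  simp only [Pi.add_apply, Pi.single_eq_same, add_right_inj] at h
  by_contra hne
  rw [Pi.single_eq_of_ne ((finRotate m).injective.ne hne)] at h
  exact one_ne_zero h

variable [mΩ : MeasurableSpace Ω] {μ : Measure Ω} {j0 : Fin m}

theorem measurable_urnFilt (n : ℕ) : Measurable[urnFilt m R n] (R n) :=
  measurable_iff_comap_le.2 <| le_iSup₂ (f := fun i (_ : i ∈ Finset.range (n + 1)) =>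
    MeasurableSpace.comap (R i) inferInstance) n (Finset.self_mem_range_succ n)

namespace IsCyclicUrn

theorem urnFilt_le (hR : IsCyclicUrn μ m j0 R) (n : ℕ) : urnFilt m R n ≤ mΩ :=
  iSup₂_le fun i _ => (hR.meas i).comap_le

theorem nonneg (hR : IsCyclicUrn μ m j0 R) (n : ℕ) (ω : Ω) (t : Fin m) : 0 ≤ R n ω t := by
  obtain ⟨z, hz⟩ := hR.natVal n ω t
  exact hz ▸ z.cast_nonneg

theorem measurableSet_urnStepEvent (hR : IsCyclicUrn μ m j0 R) (n : ℕ) (j : Fin m) :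
    MeasurableSet (urnStepEvent R n j) :=
  measurableSet_eq_fun (hR.meas (n + 1)) <| measurable_pi_lambda _ fun i =>
    ((measurable_pi_apply i).comp (hR.meas n)).add_const _

theorem measureReal_urnStepEvent (hR : IsCyclicUrn μ m j0 R) (n : ℕ) (j : Fin m) :
    μ.real (urnStepEvent R n j) = (∫ ω, R n ω j ∂μ) / (n + 1) := by
  have := hR.isProb
  rw [← integral_indicator_one (hR.measurableSet_urnStepEvent n j),
    ← integral_condExp (hR.urnFilt_le n)]
  exact (integral_congr_ae (hR.step n j)).trans (integral_div _ _)

theorem integrable_eval_of_ae_sum_eq (hR : IsCyclicUrn μ m j0 R) {n : ℕ}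
    (hsum : ∀ᵐ ω ∂μ, ∑ t, R n ω t = n + 1) (t : Fin m) :
    Integrable (fun ω => R n ω t) μ := by
  have := hR.isProb
  refine Integrable.of_bound ((measurable_pi_apply t).comp (hR.meas n)).aestronglyMeasurable
    ((n : ℝ) + 1) ?_
  filter_upwards [hsum] with ω hω
  rw [Real.norm_of_nonneg (hR.nonneg n ω t), ← hω]
  exact Finset.single_le_sum (fun s _ => hR.nonneg n ω s) (Finset.mem_univ t)

theorem ae_exists_mem_urnStepEvent_of_ae_sum_eq (hR : IsCyclicUrn μ m j0 R) {n : ℕ}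
    (hsum : ∀ᵐ ω ∂μ, ∑ t, R n ω t = n + 1) :
    ∀ᵐ ω ∂μ, ∃ j, ω ∈ urnStepEvent R n j := by
  have := hR.isProb
  refine ae_exists_mem_of_sum_measureReal_eq_one (hR.measurableSet_urnStepEvent n)
    (pairwise_disjoint_urnStepEvent R n) ?_
  simp_rw [hR.measureReal_urnStepEvent, ← Finset.sum_div]
  rw [← integral_finsetSum _ fun t _ => hR.integrable_eval_of_ae_sum_eq hsum t,
    integral_congr_ae hsum, integral_const, probReal_univ, one_smul, div_self (by positivity)]

theorem ae_sum_eq (hR : IsCyclicUrn μ m j0 R) (n : ℕ) :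
    ∀ᵐ ω ∂μ, ∑ t, R n ω t = n + 1 := by
  induction n with
  | zero => exact ae_of_all _ fun ω => by simp [hR.init ω]
  | succ n ih =>
    filter_upwards [ih, hR.ae_exists_mem_urnStepEvent_of_ae_sum_eq ih] with ω hsum ⟨j, hj⟩
    simp only [mem_urnStepEvent_iff.1 hj, Pi.add_apply]
    rw [Finset.sum_add_distrib, hsum, Finset.sum_pi_single']
    push_cast
    simp

theorem ae_exists_mem_urnStepEvent (hR : IsCyclicUrn μ m j0 R) (n : ℕ) :
    ∀ᵐ ω ∂μ, ∃ j, ω ∈ urnStepEvent R n j :=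
  hR.ae_exists_mem_urnStepEvent_of_ae_sum_eq (hR.ae_sum_eq n)

theorem integrable_eval (hR : IsCyclicUrn μ m j0 R) (n : ℕ) (t : Fin m) :
    Integrable (fun ω => R n ω t) μ :=
  hR.integrable_eval_of_ae_sum_eq (hR.ae_sum_eq n) t

theorem integrable (hR : IsCyclicUrn μ m j0 R) (n : ℕ) : Integrable (R n) μ :=
  Integrable.of_eval (hR.integrable_eval n)

theorem ae_eval_succ (hR : IsCyclicUrn μ m j0 R) (n : ℕ) (t : Fin m) :
    (fun ω => R (n + 1) ω t) =ᵐ[μ]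
      (fun ω => R n ω t) + (urnStepEvent R n ((finRotate m).symm t)).indicator 1 := by
  filter_upwards [hR.ae_exists_mem_urnStepEvent n] with ω ⟨j, hj⟩
  rw [congrFun (mem_urnStepEvent_iff.1 hj) t, Pi.add_apply, Pi.add_apply, add_right_inj]
  by_cases hjt : j = (finRotate m).symm t
  · subst hjt
    rw [Equiv.apply_symm_apply, Pi.single_eq_same, Set.indicator_of_mem hj, Pi.one_apply]
  · have hne : finRotate m j ≠ t := fun h => hjt (by rw [← h, Equiv.symm_apply_apply])
    have hnot : ω ∉ urnStepEvent R n ((finRotate m).symm t) :=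
      Set.disjoint_left.1 (pairwise_disjoint_urnStepEvent R n hjt) hj
    rw [Pi.single_eq_of_ne' hne, Set.indicator_of_notMem hnot]

theorem condExp_eval_succ (hR : IsCyclicUrn μ m j0 R) (n : ℕ) (t : Fin m) :
    μ[fun ω => R (n + 1) ω t | urnFilt m R n] =ᵐ[μ]
      fun ω => R n ω t + ((n : ℝ) + 1)⁻¹ * R n ω ((finRotate m).symm t) := by
  have := hR.isProb
  set A := urnStepEvent R n ((finRotate m).symm t)
  have hA : Integrable (A.indicator (1 : Ω → ℝ)) μ :=
    (integrable_const 1).indicator (hR.measurableSet_urnStepEvent n _)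
  have hRn : μ[fun ω => R n ω t | urnFilt m R n] = fun ω => R n ω t :=
    condExp_of_stronglyMeasurable (hR.urnFilt_le n)
      ((measurable_pi_apply t).comp (measurable_urnFilt n)).stronglyMeasurable
      (hR.integrable_eval n t)
  filter_upwards [condExp_congr_ae (m := urnFilt m R n) (hR.ae_eval_succ n t),
    condExp_add (m := urnFilt m R n) (hR.integrable_eval n t) hA,
    hR.step n ((finRotate m).symm t)] with ω h_eval h_add h_step
  rw [h_eval, h_add, Pi.add_apply, hRn, ← div_eq_inv_mul]
  exact congrArg (R n ω t + ·) h_step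

theorem ae_condExp_succ (hR : IsCyclicUrn μ m j0 R) (n : ℕ) :
    ∀ᵐ ω ∂μ, μ[R (n + 1) | urnFilt m R n] ω =
      R n ω + ((n : ℝ) + 1)⁻¹ • (R n ω ∘ (finRotate m).symm) := by
  filter_upwards [ae_condExp_apply_eq (m := urnFilt m R n) (hR.integrable (n + 1)),
    ae_all_iff.2 (hR.condExp_eval_succ n)] with ω h_apply h_eval
  ext t
  rw [h_apply, h_eval]
  rfl

theorem expVec_succ (hR : IsCyclicUrn μ m j0 R) (n : ℕ) :
    expVec μ (R (n + 1)) =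
      expVec μ (R n) + ((n : ℝ) + 1)⁻¹ • (expVec μ (R n) ∘ (finRotate m).symm) := by
  have := hR.isProb
  ext t
  rw [expVec, ← integral_condExp (hR.urnFilt_le n),
    integral_congr_ae (hR.condExp_eval_succ n t),
    integral_add (hR.integrable_eval n t) ((hR.integrable_eval n _).const_mul _),
    integral_const_mul]
  rfl

theorem expVec_zero (hR : IsCyclicUrn μ m j0 R) (ω : Ω) : expVec μ (R 0) = R 0 ω := by
  have := hR.isProb
  ext t
  simp [expVec, hR.init]

theorem condExp_ucoef_succ (hR : IsCyclicUrn μ m j0 R) (k n : ℕ) :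
    μ[fun ω => ucoef m k (R (n + 1) ω - expVec μ (R (n + 1))) | urnFilt m R n] =ᵐ[μ]
      fun ω => (1 + cw m ^ k / ((n : ℂ) + 1)) * ucoef m k (R n ω - expVec μ (R n)) := by
  have := hR.isProb
  have h_affine := (ucoefCLM m k).comp_condExp_add_const_comm (hR.urnFilt_le n)
    (hR.integrable (n + 1)) (-ucoefCLM m k (expVec μ (R (n + 1))))
  have h_fun : (fun ω => ucoef m k (R (n + 1) ω - expVec μ (R (n + 1)))) =
      fun ω => ucoefCLM m k (R (n + 1) ω) + -ucoefCLM m k (expVec μ (R (n + 1))) := by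
    funext ω
    rw [← ucoefCLM_apply, map_sub, sub_eq_add_neg]
  rw [h_fun]
  filter_upwards [h_affine, hR.ae_condExp_succ n] with ω h_affine h_succ
  rw [← h_affine, h_succ, hR.expVec_succ, ← ucoefCLM_apply, map_sub]
  simp only [map_add, map_smul, ucoefCLM_apply, ucoef_comp_finRotate_symm, Complex.real_smul]
  push_cast
  ring

/-- Also at `n = 0`, where `Mart` is `0` by definition, because `R 0` is deterministic. -/
theorem mart_eq_mul_ucoef (hR : IsCyclicUrn μ m j0 R) (k n : ℕ) (ω : Ω) :
    Mart μ m k R n ω = Complex.Gamma ((n : ℂ) + 1) / Complex.Gamma ((n : ℂ) + 1 + cw m ^ k) *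
      ucoef m k (R n ω - expVec μ (R n)) := by
  rcases eq_or_ne n 0 with rfl | hn
  · simp [Mart, hR.expVec_zero ω, ucoef]
  · rw [Mart, if_neg hn]
    rfl

theorem condExp_mart_succ (hR : IsCyclicUrn μ m j0 R) (k n : ℕ) :
    μ[Mart μ m k R (n + 1) | urnFilt m R n] =ᵐ[μ] Mart μ m k R n := by
  set c := Complex.Gamma (((n + 1 : ℕ) : ℂ) + 1) /
    Complex.Gamma (((n + 1 : ℕ) : ℂ) + 1 + cw m ^ k) with hc
  have h_fun : Mart μ m k R (n + 1) =
      c • fun ω => ucoef m k (R (n + 1) ω - expVec μ (R (n + 1))) :=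
    funext (hR.mart_eq_mul_ucoef k (n + 1))
  filter_upwards [condExp_smul (m := urnFilt m R n) (μ := μ) c
    (fun ω => ucoef m k (R (n + 1) ω - expVec μ (R (n + 1)))),
    hR.condExp_ucoef_succ k n] with ω h_smul h_ucoef
  rw [h_fun, h_smul, Pi.smul_apply, h_ucoef, hR.mart_eq_mul_ucoef k n ω, smul_eq_mul, ← mul_assoc]
  rcases eq_or_ne n 0 with rfl | hn
  -- `1 + ω^k` vanishes when `ω^k = -1`, so the Gamma recursion is unavailable, but `X_0 = 0`.
  · simp [hR.expVec_zero ω, ucoef]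
  · rw [hc]
    congr 1
    push_cast
    exact Complex.Gamma_add_one_div_Gamma_add_one_add_mul (by exact_mod_cast n.succ_ne_zero)
      (natCast_add_one_add_cw_pow_ne_zero m k hn)

end IsCyclicUrn

end Urn

theorem stmt12 {Ω : Type*} [MeasurableSpace Ω] (μ : Measure Ω) (m : ℕ) (hm : 2 ≤ m)
    (R : ℕ → Ω → Fin m → ℝ) (hR : IsCyclicUrn μ m ⟨0, by omega⟩ R)
    (k : ℕ) :
    (∀ n : ℕ, ∫ ω, Mart μ m k R n ω ∂μ = 0) ∧
    (∀ n : ℕ, μ[Mart μ m k R (n + 1) | urnFilt m R n] =ᵐ[μ] Mart μ m k R n) := by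
  have := hR.isProb
  refine ⟨fun n => ?_, hR.condExp_mart_succ k⟩
  induction n with
  | zero => simp [Mart]
  | succ n ih =>
    rw [← integral_condExp (hR.urnFilt_le n), integral_congr_ae (hR.condExp_mart_succ k n), ih]

end
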